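/- (Weak duality for elastic-net pin-SVM.) Let τ ≥ −1, μ > 0, c ∈ ℝ, u_1, …, u_m ∈ ℝⁿ, y_1, …, y_m ∈ {−1, +1}. For every x ∈ ℝⁿ with ‖x‖₂ ≤ 1, every β ∈ ℝⁿ with ‖β‖_∞ ≤ μ, and every ξ ∈ ℝᵐ with −τ/m ≤ ξ_i ≤ 1/m for all i, it holds that c∑_{i=1}^m ξ_i − ‖∑_{i=1}^m ξ_i y_i u_i − β‖₂ ≤ μ‖x‖₁ + (1/m)∑_{i=1}^m L_τ(c − y_i⟨u_i, x⟩). -/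

import Mathlib

open scoped RealInnerProductSpace

/-!
Pair the dual residual `v = ∑ ξᵢ yᵢ uᵢ - β` with `x`: Cauchy–Schwarz and `‖x‖ ≤ 1` give
`⟪v, x⟫ ≤ ‖v‖`, and `c ∑ ξᵢ - ⟪v, x⟫ = ∑ ξᵢ (c - yᵢ⟪uᵢ, x⟫) + ⟪β, x⟫`. The first sum is
bounded termwise by `(1/m) L_τ` because `ξᵢ ∈ [-τ/m, 1/m]`, the second by `μ ‖x‖₁`
(Hölder for `ℓ^∞`–`ℓ¹`).
-/

noncomputable def pinballLoss (τ t : ℝ) : ℝ := if 0 ≤ t then t else -τ * t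

/-- `k L_τ` is the support function of the interval `[-τ k, k]`. -/
lemma mul_le_mul_pinballLoss {τ k a : ℝ} (t : ℝ) (hlo : -τ * k ≤ a) (hhi : a ≤ k) :
    a * t ≤ k * pinballLoss τ t := by
  unfold pinballLoss
  split_ifs with ht
  · exact mul_le_mul_of_nonneg_right hhi ht
  · calc a * t ≤ -τ * k * t := mul_le_mul_of_nonpos_right hlo (le_of_not_ge ht)
      _ = k * (-τ * t) := by ring

lemma real_inner_le_norm_of_norm_le_one {E : Type*} [NormedAddCommGroup E]
    [InnerProductSpace ℝ E] (v : E) {x : E} (hx : ‖x‖ ≤ 1) : ⟪v, x⟫ ≤ ‖v‖ :=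
  (real_inner_le_norm v x).trans (mul_le_of_le_one_right (norm_nonneg v) hx)

lemma real_inner_le_mul_sum_abs {ι : Type*} [Fintype ι] {β : EuclideanSpace ℝ ι} {μ : ℝ}
    (hβ : ∀ j, |β j| ≤ μ) (x : EuclideanSpace ℝ ι) : ⟪β, x⟫ ≤ μ * ∑ j, |x j| := by
  rw [PiLp.inner_apply, Finset.mul_sum]
  refine Finset.sum_le_sum fun j _ => ?_
  calc ⟪β j, x j⟫ ≤ |x j * β j| := le_abs_self _
    _ = |β j| * |x j| := by rw [abs_mul, mul_comm]
    _ ≤ μ * |x j| := mul_le_mul_of_nonneg_right (hβ j) (abs_nonneg _)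

theorem epSVM_weak_duality_general {n m : ℕ} (τ μ c : ℝ)
    (u : Fin m → EuclideanSpace ℝ (Fin n)) (y : Fin m → ℝ)
    (L : ℝ → ℝ) (hL : L = fun t => if 0 ≤ t then t else -τ * t)
    (x β : EuclideanSpace ℝ (Fin n)) (ξ : Fin m → ℝ)
    (hx : ‖x‖ ≤ 1) (hβ : ∀ j, |β j| ≤ μ)
    (hξ : ∀ i, -τ / (m : ℝ) ≤ ξ i ∧ ξ i ≤ 1 / (m : ℝ)) :
    c * (∑ i : Fin m, ξ i) - ‖(∑ i : Fin m, ξ i • (y i • u i)) - β‖ ≤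
      μ * (∑ j : Fin n, |x j|) +
        (1 / (m : ℝ)) * ∑ i : Fin m, L (c - y i * ⟪u i, x⟫) := by
  set v := (∑ i : Fin m, ξ i • (y i • u i)) - β
  have hloss : ∀ i, ξ i * (c - y i * ⟪u i, x⟫) ≤ (1 / (m : ℝ)) * L (c - y i * ⟪u i, x⟫) :=
    fun i => hL ▸ mul_le_mul_pinballLoss (τ := τ) _ (by rw [mul_one_div]; exact (hξ i).1) (hξ i).2
  have hlagrange : c * ∑ i, ξ i - ⟪v, x⟫ = ∑ i, ξ i * (c - y i * ⟪u i, x⟫) + ⟪β, x⟫ := by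
    simp only [v, inner_sub_left, sum_inner, real_inner_smul_left, mul_sub,
      Finset.sum_sub_distrib, Finset.mul_sum]
    ring_nf
  calc c * ∑ i, ξ i - ‖v‖ ≤ c * ∑ i, ξ i - ⟪v, x⟫ := by
        linarith [real_inner_le_norm_of_norm_le_one v hx]
    _ = ∑ i, ξ i * (c - y i * ⟪u i, x⟫) + ⟪β, x⟫ := hlagrange
    _ ≤ (1 / (m : ℝ)) * ∑ i, L (c - y i * ⟪u i, x⟫) + μ * ∑ j, |x j| := by
        rw [Finset.mul_sum]
        exact add_le_add (Finset.sum_le_sum fun i _ => hloss i) (real_inner_le_mul_sum_abs hβ x)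
    _ = _ := add_comm _ _

/-- Weak duality for elastic-net pin-SVM: for any primal feasible `x` (`‖x‖₂ ≤ 1`) and any
dual feasible `(β, ξ)` (`‖β‖_∞ ≤ μ`, `-τ/m ≤ ξ_i ≤ 1/m`), the dual objective is at most
the primal objective. -/
theorem epSVM_weak_duality {n m : ℕ} (hm : 0 < m) (τ μ c : ℝ) (hτ : -1 ≤ τ) (hμ : 0 < μ)
    (u : Fin m → EuclideanSpace ℝ (Fin n)) (y : Fin m → ℝ)
    (hy : ∀ i, y i = 1 ∨ y i = -1)
    (L : ℝ → ℝ) (hL : L = fun t => if 0 ≤ t then t else -τ * t)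
    (x β : EuclideanSpace ℝ (Fin n)) (ξ : Fin m → ℝ)
    (hx : ‖x‖ ≤ 1) (hβ : ∀ j, |β j| ≤ μ)
    (hξ : ∀ i, -τ / (m : ℝ) ≤ ξ i ∧ ξ i ≤ 1 / (m : ℝ)) :
    c * (∑ i : Fin m, ξ i) - ‖(∑ i : Fin m, ξ i • (y i • u i)) - β‖ ≤
      μ * (∑ j : Fin n, |x j|) +
        (1 / (m : ℝ)) * ∑ i : Fin m, L (c - y i * ⟪u i, x⟫) :=
  epSVM_weak_duality_general τ μ c u y L hL x β ξ hx hβ hξ
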